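/- Let X be a complete metric space and f : (0, ∞) → X continuous such that for every x > 0 the sequence f(n·x) converges in X. Then f(x) converges as x → ∞. -/

import Mathlib

/-!
Baire's theorem, applied to the closed sets `{x | ∀ m n ≥ N, dist (f (m * x)) (f (n * x)) ≤ ε}`,
gives an open set `U ⊆ (0, ∞)` and an `N` such that `f (n * x)` is `ε`-close to its limit `g x`
for all `x ∈ U` and `n ≥ N`. The limit `g` is invariant under positive rational dilations; with
the continuity of `f` this forces `g` to be constant, say `L`. Every large `t` is of the form
`n * x` with `n ≥ N` and `x ∈ U`, hence `dist (f t) L ≤ ε`.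
-/

open Filter Set Topology Metric

theorem exists_isOpen_forall_dist_le_of_tendsto {Y X : Type*} [TopologicalSpace Y] [BaireSpace Y]
    [Nonempty Y] [PseudoMetricSpace X] {F : ℕ → Y → X} {G : Y → X}
    (hF : ∀ n, Continuous (F n)) (hFG : ∀ y, Tendsto (fun n => F n y) atTop (𝓝 (G y)))
    {ε : ℝ} (hε : 0 < ε) :
    ∃ N, ∃ U : Set Y, IsOpen U ∧ U.Nonempty ∧ ∀ y ∈ U, ∀ n ≥ N, dist (F n y) (G y) ≤ ε := by
  set E : ℕ → Set Y := fun N => {y | ∀ m ≥ N, ∀ n ≥ N, dist (F m y) (F n y) ≤ ε}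
  have hE : ∀ N, IsClosed (E N) := fun N => by
    simp only [E, ofPred_forall]
    exact isClosed_iInter fun m => isClosed_iInter fun _ => isClosed_iInter fun n =>
      isClosed_iInter fun _ => isClosed_le ((hF m).dist (hF n)) continuous_const
  have hcover : ⋃ N, E N = univ := eq_univ_of_forall fun y => by
    obtain ⟨N, hN⟩ := Metric.cauchySeq_iff.1 (hFG y).cauchySeq ε hε
    exact mem_iUnion.2 ⟨N, fun m hm n hn => (hN m hm n hn).le⟩
  obtain ⟨N, hN⟩ := nonempty_interior_of_iUnion_of_closed hE hcover
  refine ⟨N, interior (E N), isOpen_interior, hN, fun y hy n hn => ?_⟩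
  refine le_of_tendsto (tendsto_const_nhds.dist (hFG y)) ?_
  filter_upwards [eventually_ge_atTop N] with m hm
  exact interior_subset hy n hn m hm

theorem eventually_exists_nat_mul_mem_Icc {a b : ℝ} (ha : 0 < a) (hab : a < b) (N : ℕ) :
    ∀ᶠ t in atTop, ∃ n ≥ N, ∃ x ∈ Icc a b, n * x = t := by
  have hb : 0 < b := ha.trans hab
  -- past `a * b / (b - a)` consecutive dilates `n • [a, b]` overlap, so `n = ⌈t / b⌉₊` works
  filter_upwards [eventually_ge_atTop (max (N * b) (a * b / (b - a)))] with t ht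
  obtain ⟨hNt, habt⟩ := max_le_iff.1 ht
  rw [div_le_iff₀ (sub_pos.2 hab)] at habt
  have ht0 : 0 < t := by nlinarith
  set n := ⌈t / b⌉₊
  have hn : t / b ≤ n := Nat.le_ceil _
  have hn' : (n : ℝ) < t / b + 1 := Nat.ceil_lt_add_one (by positivity)
  have hn0 : (0 : ℝ) < n := (div_pos ht0 hb).trans_le hn
  refine ⟨n, ?_, t / n, ⟨?_, ?_⟩, mul_div_cancel₀ t hn0.ne'⟩
  · exact_mod_cast ((le_div_iff₀ hb).2 hNt).trans hn
  · rw [le_div_iff₀ hn0]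
    calc a * n ≤ a * (t / b + 1) := by gcongr
      _ = (a * t + a * b) / b := by field_simp
      _ ≤ t := by rw [div_le_iff₀ hb]; nlinarith
  · rw [div_le_iff₀ hn0]
    rwa [div_le_iff₀ hb, mul_comm] at hn

theorem eventually_exists_nat_mul_mem {U : Set ℝ} (hU : IsOpen U) (hU0 : U ⊆ Ioi 0)
    (hne : U.Nonempty) (N : ℕ) : ∀ᶠ t in atTop, ∃ n ≥ N, ∃ x ∈ U, n * x = t := by
  obtain ⟨u, hu⟩ := hne
  obtain ⟨r, hr, hball⟩ := Metric.isOpen_iff.1 hU u hu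
  have hIcc : Icc u (u + r / 2) ⊆ U := fun x hx => hball <| by
    rw [mem_ball, Real.dist_eq, abs_sub_lt_iff]
    constructor <;> linarith [hx.1, hx.2]
  filter_upwards
    [eventually_exists_nat_mul_mem_Icc (hU0 hu) (lt_add_of_pos_right u (half_pos hr)) N]
    with t ⟨n, hn, x, hx, hxt⟩
  exact ⟨n, hn, x, hIcc hx, hxt⟩

section LimitAlongMultiples

variable {X : Type*} {f g : ℝ → X}

theorem natCast_mul_eq_of_tendsto [TopologicalSpace X] [T2Space X]
    (hg : ∀ x > 0, Tendsto (fun n : ℕ => f (n * x)) atTop (𝓝 (g x)))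
    {k : ℕ} (hk : 0 < k) {x : ℝ} (hx : 0 < x) : g (k * x) = g x := by
  have hsub : Tendsto (fun n : ℕ => f ((n * k : ℕ) * x)) atTop (𝓝 (g x)) :=
    (hg x hx).comp (strictMono_mul_right_of_pos hk).tendsto_atTop
  refine tendsto_nhds_unique ?_ hsub
  simpa only [Nat.cast_mul, mul_assoc] using hg _ (by positivity)

theorem ratCast_mul_eq_of_tendsto [TopologicalSpace X] [T2Space X]
    (hg : ∀ x > 0, Tendsto (fun n : ℕ => f (n * x)) atTop (𝓝 (g x)))
    {q : ℚ} (hq : 0 < q) {x : ℝ} (hx : 0 < x) : g (q * x) = g x := by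
  have hnum : ((q.num.natAbs : ℕ) : ℝ) = q.den * q := by
    rw [Nat.cast_natAbs, Int.cast_abs, abs_of_pos (by exact_mod_cast Rat.num_pos.2 hq),
      mul_comm, ← Rat.cast_natCast, ← Rat.cast_mul, Rat.mul_den_eq_num, Rat.cast_intCast]
  calc g (q * x) = g (q.den * (q * x)) := (natCast_mul_eq_of_tendsto hg q.pos (by positivity)).symm
    _ = g (q.num.natAbs * x) := by rw [hnum, mul_assoc]
    _ = g x := natCast_mul_eq_of_tendsto hg (Int.natAbs_pos.2 (Rat.num_pos.2 hq).ne') hx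

theorem exists_isOpen_subset_Ioi_forall_dist_le [PseudoMetricSpace X] (hf : ContinuousOn f (Ioi 0))
    (hg : ∀ x > 0, Tendsto (fun n : ℕ => f (n * x)) atTop (𝓝 (g x))) {ε : ℝ} (hε : 0 < ε) :
    ∃ N : ℕ, ∃ U ⊆ Ioi (0 : ℝ), IsOpen U ∧ U.Nonempty ∧
      ∀ x ∈ U, ∀ n ≥ N, dist (f (n * x)) (g x) ≤ ε := by
  have := (isOpen_Ioi (a := (0 : ℝ))).locallyCompactSpace
  have hF : ∀ n : ℕ, Continuous fun y : Ioi (0 : ℝ) => f (n * y) := by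
    intro n
    rcases n.eq_zero_or_pos with rfl | hn
    · simpa using continuous_const
    · exact hf.comp_continuous (continuous_const.mul continuous_subtype_val)
        fun y => mem_Ioi.2 (mul_pos (Nat.cast_pos.2 hn) y.2)
  obtain ⟨N, U, hU, hne, hUN⟩ :=
    exists_isOpen_forall_dist_le_of_tendsto hF (fun y => hg y y.2) hε
  refine ⟨N, (↑) '' U, ?_, isOpen_Ioi.isOpenMap_subtype_val U hU, hne.image _, ?_⟩
  · rintro _ ⟨y, -, rfl⟩
    exact y.2
  · rintro _ ⟨y, hy, rfl⟩
    exact hUN y hy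

theorem dist_le_three_mul_of_forall_mem [MetricSpace X] (hf : ContinuousOn f (Ioi 0))
    (hg : ∀ x > 0, Tendsto (fun n : ℕ => f (n * x)) atTop (𝓝 (g x)))
    {U : Set ℝ} (hU : IsOpen U) (hU0 : U ⊆ Ioi 0) {k ε : ℝ} (hk : 0 < k) (hε : 0 < ε)
    (hfg : ∀ y ∈ U, dist (f (k * y)) (g y) ≤ ε) {x u : ℝ} (hx : 0 < x) (hu : u ∈ U) :
    dist (g x) (g u) ≤ 3 * ε := by
  -- a rational `q` with `q * x ∈ U` and `k * q * x` close to `k * u` links `g x = g (q * x)` to `g u`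
  set W := {s : ℝ | s * x ∈ U} ∩ (fun s => f (k * (s * x))) ⁻¹' ball (f (k * u)) ε
  have hW : IsOpen W := by
    refine ContinuousOn.isOpen_inter_preimage ?_ (hU.preimage (continuous_mul_const x)) isOpen_ball
    exact hf.comp (by fun_prop) fun s hs => mul_pos hk (hU0 hs)
  have huW : u / x ∈ W := by
    refine ⟨?_, ?_⟩ <;> simp only [mem_ofPred_eq, mem_preimage, div_mul_cancel₀ u hx.ne']
    · exact hu
    · exact mem_ball_self hε
  obtain ⟨q, hqU, hq⟩ := Rat.denseRange_cast.exists_mem_open hW ⟨_, huW⟩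
  have hq0 : (0 : ℝ) < q := pos_of_mul_pos_left (hU0 hqU) hx.le
  calc dist (g x) (g u) = dist (g (q * x)) (g u) := by
        rw [ratCast_mul_eq_of_tendsto hg (by exact_mod_cast hq0) hx]
    _ ≤ dist (g (q * x)) (f (k * (q * x))) + dist (f (k * (q * x))) (f (k * u))
        + dist (f (k * u)) (g u) := dist_triangle4 _ _ _ _
    _ ≤ ε + ε + ε := by
        gcongr
        · rw [dist_comm]
          exact hfg _ hqU
        · exact hq.le
        · exact hfg u hu
    _ = 3 * ε := by ring

theorem eq_of_tendsto_nat_mul [MetricSpace X] (hf : ContinuousOn f (Ioi 0))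
    (hg : ∀ x > 0, Tendsto (fun n : ℕ => f (n * x)) atTop (𝓝 (g x)))
    {x y : ℝ} (hx : 0 < x) (hy : 0 < y) : g x = g y := by
  refine eq_of_forall_dist_le fun ε hε => ?_
  obtain ⟨N, U, hU0, hU, ⟨u, hu⟩, hUN⟩ :=
    exists_isOpen_subset_Ioi_forall_dist_le hf hg (by positivity : 0 < ε / 6)
  have hk : ∀ z ∈ U, dist (f ((N + 1 : ℕ) * z)) (g z) ≤ ε / 6 :=
    fun z hz => hUN z hz (N + 1) N.le_succ
  have hdist := fun {z} (hz : 0 < z) =>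
    dist_le_three_mul_of_forall_mem hf hg hU hU0 (by positivity) (by positivity) hk hz hu
  calc dist (g x) (g y) ≤ dist (g x) (g u) + dist (g y) (g u) := dist_triangle_right _ _ _
    _ ≤ 3 * (ε / 6) + 3 * (ε / 6) := add_le_add (hdist hx) (hdist hy)
    _ = ε := by ring

end LimitAlongMultiples

theorem croft_complete_metric_general {X : Type*} [MetricSpace X]
    (f : ℝ → X) (hf : ContinuousOn f (Set.Ioi (0:ℝ)))
    (h : ∀ x > (0:ℝ), ∃ L : X, Filter.Tendsto (fun n : ℕ => f (n * x)) Filter.atTop (nhds L)) :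
    ∃ L : X, Filter.Tendsto f Filter.atTop (nhds L) := by
  have : Nonempty X := ⟨(h 1 one_pos).choose⟩
  set g : ℝ → X := fun x => limUnder atTop fun n : ℕ => f (n * x)
  have hg : ∀ x > 0, Tendsto (fun n : ℕ => f (n * x)) atTop (𝓝 (g x)) :=
    fun x hx => tendsto_nhds_limUnder (h x hx)
  refine ⟨g 1, Metric.tendsto_atTop.2 fun ε hε => ?_⟩
  obtain ⟨N, U, hU0, hU, hne, hUN⟩ := exists_isOpen_subset_Ioi_forall_dist_le hf hg (half_pos hε)
  obtain ⟨T, hT⟩ := (eventually_exists_nat_mul_mem hU hU0 hne N).exists_forall_of_atTop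
  refine ⟨T, fun t ht => ?_⟩
  obtain ⟨n, hn, x, hxU, rfl⟩ := hT t ht
  rw [eq_of_tendsto_nat_mul hf hg one_pos (hU0 hxU)]
  exact (hUN x hxU n hn).trans_lt (half_lt_self hε)

theorem croft_complete_metric {X : Type*} [MetricSpace X] [CompleteSpace X]
    (f : ℝ → X) (hf : ContinuousOn f (Set.Ioi (0:ℝ)))
    (h : ∀ x > (0:ℝ), ∃ L : X, Filter.Tendsto (fun n : ℕ => f (n * x)) Filter.atTop (nhds L)) :
    ∃ L : X, Filter.Tendsto f Filter.atTop (nhds L) :=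
  croft_complete_metric_general f hf h
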